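/- arXiv:0910.5732 — 2 statements merged into one kernel-verified Lean document; each statement's English description precedes it below -/
import Mathlib

section
/- Let (W,S) be a Coxeter system of finite rank, and suppose S1, S2 ⊆ S satisfy S = S1 ∪ S2 and, with S0 = S1 ∩ S2, m(a,b) = ∞ for all a ∈ S1−S0 and b ∈ S2−S0. Then the canonical homomorphism, induced by the inclusions of ⟨S1⟩ and ⟨S2⟩ into W, from the amalgamated free product ⟨S1⟩ *_{⟨S0⟩} ⟨S2⟩ (the pushout of the inclusions ⟨S0⟩ → ⟨S1⟩ and ⟨S0⟩ → ⟨S2⟩) to W is an isomorphism. -/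
universe u

variable {W : Type u} [Group W]

/-- `S` is a set of Coxeter generators of `W`: `W` has the Coxeter presentation
`⟨S ∣ (st)^{m(s,t)} = 1⟩` whose simple reflections are the elements of `S`. -/
def IsCoxeterGeneratingSet (W : Type u) [Group W] (S : Set W) : Prop :=
  ∃ (M : CoxeterMatrix S) (cs : CoxeterSystem M W), ∀ s : S, cs.simple s = (s : W)

/-- The presentation diagram of a Coxeter system, induced on the vertex set `A ⊆ W`:
distinct `s, t ∈ A` are adjacent exactly when `s * t` has finite order
(recall `orderOf x = 0` exactly when `x` has infinite order). -/
def presGraph (W : Type u) [Group W] (A : Set W) : SimpleGraph W where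
  Adj s t := s ≠ t ∧ s ∈ A ∧ t ∈ A ∧ orderOf (s * t) ≠ 0
  symm := ⟨by
    rintro s t ⟨h1, h2, h3, h4⟩
    refine ⟨h1.symm, h3, h2, ?_⟩
    have : SemiconjBy s (t * s) (s * t) := by unfold SemiconjBy; group
    rwa [this.orderOf_eq s]⟩
  loopless := ⟨by rintro s ⟨h, -⟩; exact h rfl⟩

/-- `T` separates `R`: two elements of `R − T` lie in different connected components of the
induced subgraph of the presentation diagram on `R − T`. -/
def Separates (W : Type u) [Group W] (R T : Set W) : Prop :=
  ∃ a ∈ R \ T, ∃ b ∈ R \ T, ¬ (presGraph W (R \ T)).Reachable a b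

/-- A subset `C` is complete if every product of two of its elements has finite order. -/
def IsCompleteSet (W : Type u) [Group W] (C : Set W) : Prop :=
  ∀ s ∈ C, ∀ t ∈ C, orderOf (s * t) ≠ 0

/-- `R` is separated by a complete subset of `R`. -/
def SeparatedByComplete (W : Type u) [Group W] (R : Set W) : Prop :=
  ∃ T ⊆ R, IsCompleteSet W T ∧ Separates W R T

/-- `(S1, S0, S2)` is a separation of `S`. -/
def IsSeparation (W : Type u) [Group W] (S S1 S0 S2 : Set W) : Prop :=
  S1 ∪ S2 = S ∧ S1 ∩ S2 = S0 ∧ (S1 \ S0).Nonempty ∧ (S2 \ S0).Nonempty ∧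
    ∀ a ∈ S1 \ S0, ∀ b ∈ S2 \ S0, orderOf (a * b) = 0

/-- `S0` is an `(a,b)`-separator of `S`: `a` and `b` lie in different connected components
of the induced subgraph of the presentation diagram on `S − S0`. -/
def IsABSeparator (W : Type u) [Group W] (S S0 : Set W) (a b : W) : Prop :=
  a ∈ S \ S0 ∧ b ∈ S \ S0 ∧ ¬ (presGraph W (S \ S0)).Reachable a b

/-- `S0` is a relative minimal separator of `S`: a minimal `(a,b)`-separator of `S`
for some `a, b`. -/
def RelMinSeparator (W : Type u) [Group W] (S S0 : Set W) : Prop :=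
  ∃ a b, IsABSeparator W S S0 a b ∧ ∀ T ⊂ S0, ¬ IsABSeparator W S T a b

/-- The set `wTw⁻¹`. -/
def conjSet (w : W) (T : Set W) : Set W := (fun x => w * x * w⁻¹) '' T

/-- `S0` is a c-minimal separator of `S`: `S0` separates `S` and no conjugate of a
proper subset of `S0` that lies in `S` separates `S`. -/
def CMinSeparator (W : Type u) [Group W] (S S0 : Set W) : Prop :=
  Separates W S S0 ∧
    ¬ ∃ (w : W) (T : Set W), T ⊆ S0 ∧ T ≠ S0 ∧ conjSet w T ⊆ S ∧ Separates W S (conjSet w T)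

/-- The union of the bags over the component of the tree `T` minus the edge `{u,v}`
containing `u`. -/
def edgeSide {W : Type u} [Group W] {V : Type} (T : SimpleGraph V) (bag : V → Set W)
    (u v : V) : Set W :=
  ⋃ w ∈ {w | (T.deleteEdges {s(u, v)}).Reachable u w}, bag w

/-- A visual tree decomposition of the Coxeter system `(W, S)`: a finite nonempty tree
with bags `R_v ⊆ S` covering `S` such that for each edge `{u,v}`, the unions `A`, `B` of
bags over the two components of the tree minus the edge satisfy `A ∩ B = R_u ∩ R_v` and
`m(a,b) = ∞` for `a ∈ A − R_u ∩ R_v`, `b ∈ B − R_u ∩ R_v`.  This exhibits `W` as an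
iterated visual amalgamated product of the groups `⟨R_v⟩` over the groups `⟨R_u ∩ R_v⟩`. -/
structure VisualTreeDecomp (W : Type u) [Group W] (S : Set W) where
  V : Type
  fintypeV : Fintype V
  T : SimpleGraph V
  isTree : T.IsTree
  bag : V → Set W
  bag_subset : ∀ v, bag v ⊆ S
  bags_cover : (⋃ v, bag v) = S
  inter_eq : ∀ u v, T.Adj u v →
    edgeSide T bag u v ∩ edgeSide T bag v u = bag u ∩ bag v
  infinite_order : ∀ u v, T.Adj u v →
    ∀ a ∈ edgeSide T bag u v \ (bag u ∩ bag v),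
      ∀ b ∈ edgeSide T bag v u \ (bag u ∩ bag v), orderOf (a * b) = 0

/-- A visual tree decomposition is reduced if each edge set is a proper subset of
the two incident bags. -/
def VisualTreeDecomp.Reduced {W : Type u} [Group W] {S : Set W}
    (D : VisualTreeDecomp W S) : Prop :=
  ∀ u v, D.T.Adj u v → D.bag u ∩ D.bag v ⊂ D.bag u ∧ D.bag u ∩ D.bag v ⊂ D.bag v

/-- A group `G` has property FA if every action of `G` by graph automorphisms and
without inversions on a (nonempty) tree has a global fixed vertex. -/
def HasPropertyFA (G : Type u) [Group G] : Prop :=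
  ∀ (V : Type u) (T : SimpleGraph V), T.IsTree →
    ∀ [MulAction G V],
      (∀ (g : G) (a b : V), T.Adj a b → T.Adj (g • a) (g • b)) →
      (¬ ∃ (g : G) (a b : V), T.Adj a b ∧ g • a = b ∧ g • b = a) →
      ∃ x : V, ∀ g : G, g • x = x

/-- The class 𝓕𝓐 of subgroups of `W`: those contained in a subgroup with property FA. -/
def MemFA {W : Type u} [Group W] (H : Subgroup W) : Prop :=
  ∃ K : Subgroup W, H ≤ K ∧ HasPropertyFA K

/-- A chord of a closed walk: an edge of the graph between two vertices of the walk
that is not an edge of the walk. -/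
def SimpleGraph.Walk.HasChord {V : Type*} {G : SimpleGraph V} {v : V} (c : G.Walk v v) : Prop :=
  ∃ a b, a ∈ c.support ∧ b ∈ c.support ∧ G.Adj a b ∧ s(a, b) ∉ c.edges

/-- A graph is chordal if every cycle of length at least four has a chord. -/
def SimpleGraph.IsChordalGraph {V : Type*} (G : SimpleGraph V) : Prop :=
  ∀ (v : V) (c : G.Walk v v), c.IsCycle → 4 ≤ c.length → c.HasChord

/-- The set of all conjugates of elements of `S`. -/
def ConjugatesOf (W : Type u) [Group W] (S : Set W) : Set W :=
  {x | ∃ s ∈ S, ∃ w : W, x = w * s * w⁻¹}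

/-- `S` is sharp-angled with respect to `S'`: every pair `s, t ∈ S` with `2 < m(s,t) < ∞`
is conjugate by a single element into `S'`. -/
def SharpAngled (W : Type u) [Group W] (S S' : Set W) : Prop :=
  ∀ s ∈ S, ∀ t ∈ S, 2 < orderOf (s * t) →
    ∃ w : W, w * s * w⁻¹ ∈ S' ∧ w * t * w⁻¹ ∈ S'

/-- `S''` is obtained from `S` by an elementary twist `(S1, ℓ, S2)`. -/
def ElemTwist (W : Type u) [Group W] (S S'' : Set W) : Prop :=
  ∃ (S1 S2 : Set W) (ℓ : W), S1 ∪ S2 = S ∧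
    (∀ a ∈ S1 \ (S1 ∩ S2), ∀ b ∈ S2 \ (S1 ∩ S2), orderOf (a * b) = 0) ∧
    ℓ ∈ Subgroup.closure (S1 ∩ S2) ∧ conjSet ℓ (S1 ∩ S2) = S1 ∩ S2 ∧
    S'' = S1 ∪ conjSet ℓ S2

/-- Two sets of Coxeter generators are twist equivalent if one is obtained from the
other by a finite sequence of elementary twists. -/
def TwistEquiv (W : Type u) [Group W] (S S' : Set W) : Prop :=
  Relation.ReflTransGen (ElemTwist W) S S'

/-- `(W, S)` satisfies the twist conjecture: every set `S'` of Coxeter generators of `W`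
consisting of conjugates of elements of `S`, with `S` sharp-angled with respect to `S'`,
is twist equivalent to `S`. -/
def SatisfiesTwistConjecture (W : Type u) [Group W] (S : Set W) : Prop :=
  ∀ S' : Set W, IsCoxeterGeneratingSet W S' → S' ⊆ ConjugatesOf W S →
    SharpAngled W S S' → TwistEquiv W S S'

/-! A cocone under `⟨S1⟩ ← ⟨S0⟩ → ⟨S2⟩` assigns consistent images to all generators in
`S = S1 ∪ S2`. Each Coxeter relation `(st)^{m(s,t)} = 1` involves two generators lying in a
common `S_i` (if `s ∈ S1 − S0` and `t ∈ S2 − S0` then `m(s,t) = ∞` and there is no relation),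
so it already holds in `⟨S_i⟩`; hence the generator images extend to `W`, uniquely because
`S` generates `W`. -/

open CategoryTheory Limits Subgroup

theorem CoxeterMatrix.isLiftable_of_cover {B : Type*} {M : CoxeterMatrix B} {G : Type*}
    [Monoid G] {f : B → G} {B1 B2 : Set B} (hcover : ∀ i, i ∈ B1 ∨ i ∈ B2)
    (h1 : ∀ i ∈ B1, ∀ j ∈ B1, (f i * f j) ^ M i j = 1)
    (h2 : ∀ i ∈ B2, ∀ j ∈ B2, (f i * f j) ^ M i j = 1)
    (hinf : ∀ i ∈ B1 \ B2, ∀ j ∈ B2 \ B1, M i j = 0) : M.IsLiftable f := by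
  intro i j
  by_cases hi : i ∈ B2 <;> by_cases hj : j ∈ B2
  · exact h2 i hi j hj
  · have hj1 := (hcover j).resolve_right hj
    by_cases hi1 : i ∈ B1
    · exact h1 i hi1 j hj1
    · rw [M.symmetric, hinf j ⟨hj1, hj⟩ i ⟨hi, hi1⟩, pow_zero]
  · have hi1 := (hcover i).resolve_right hi
    by_cases hj1 : j ∈ B1
    · exact h1 i hi1 j hj1
    · rw [hinf i ⟨hi1, hi⟩ j ⟨hj, hj1⟩, pow_zero]
  · exact h1 i ((hcover i).resolve_right hi) j ((hcover j).resolve_right hj)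

theorem MonoidHom.comp_subtype_closure_eq {G : Type*} [Group G] {T : Set W} {φ : W →* G}
    {l : closure T →* G} (h : ∀ x (hx : x ∈ T), φ x = l ⟨x, subset_closure hx⟩) :
    φ.comp (closure T).subtype = l :=
  MonoidHom.eq_of_eqOn_dense (closure_preimage_eq_top T) fun x hx => h x hx

theorem MonoidHom.eq_of_comp_subtype_closure_eq {G : Type*} [Group G] {S1 S2 : Set W}
    (hgen : closure (S1 ∪ S2) = ⊤) {φ ψ : W →* G}
    (h1 : φ.comp (closure S1).subtype = ψ.comp (closure S1).subtype)
    (h2 : φ.comp (closure S2).subtype = ψ.comp (closure S2).subtype) : φ = ψ :=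
  eq_of_eqOn_dense hgen fun x hx => hx.elim
    (fun hx => DFunLike.congr_fun h1 ⟨x, subset_closure hx⟩)
    (fun hx => DFunLike.congr_fun h2 ⟨x, subset_closure hx⟩)

theorem MonoidHom.map_mul_pow_eq_one {G : Type*} [Group G] {H : Subgroup W} (l : H →* G)
    {a b : H} {n : ℕ} (h : ((a : W) * b) ^ n = 1) : (l a * l b) ^ n = 1 := by
  rw [← map_mul, ← map_pow, show (a * b) ^ n = 1 from Subtype.ext h, map_one]

theorem IsCoxeterGeneratingSet.closure_eq_top {S : Set W} (hcox : IsCoxeterGeneratingSet W S) :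
    closure S = ⊤ := by
  obtain ⟨M, cs, hsimple⟩ := hcox
  rw [← cs.subgroup_closure_range_simple]
  congr
  ext x
  exact ⟨fun hx => ⟨⟨x, hx⟩, hsimple _⟩, by rintro ⟨s, rfl⟩; rw [hsimple]; exact s.2⟩

theorem IsCoxeterGeneratingSet.exists_lift {S S1 S2 : Set W} (hcox : IsCoxeterGeneratingSet W S)
    (hunion : S1 ∪ S2 = S)
    (hinf : ∀ a ∈ S1 \ (S1 ∩ S2), ∀ b ∈ S2 \ (S1 ∩ S2), orderOf (a * b) = 0)
    {G : Type*} [Group G] (l : closure S1 →* G) (r : closure S2 →* G)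
    (hlr : l.comp (inclusion (closure_mono Set.inter_subset_left)) =
      r.comp (inclusion (closure_mono Set.inter_subset_right))) :
    ∃ φ : W →* G, φ.comp (closure S1).subtype = l ∧ φ.comp (closure S2).subtype = r := by
  classical
  obtain ⟨M, cs, hsimple⟩ := hcox
  have hcover (s : S) : (s : W) ∈ S1 ∨ (s : W) ∈ S2 := by rw [← Set.mem_union, hunion]; exact s.2
  have hpow (s t : S) : ((s : W) * t) ^ M s t = 1 := by
    simpa only [hsimple] using cs.simple_mul_simple_pow s t
  let f : S → G := fun s =>
    if h : (s : W) ∈ S1 then l ⟨s, subset_closure h⟩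
    else r ⟨s, subset_closure ((hcover s).resolve_left h)⟩
  have hf1 (s : S) (h : (s : W) ∈ S1) : f s = l ⟨s, subset_closure h⟩ := dif_pos h
  have hf2 (s : S) (h : (s : W) ∈ S2) : f s = r ⟨s, subset_closure h⟩ := by
    by_cases h1 : (s : W) ∈ S1
    · rw [hf1 s h1]
      exact DFunLike.congr_fun hlr ⟨s, subset_closure ⟨h1, h⟩⟩
    · exact dif_neg h1
  have hlift : M.IsLiftable f := by
    refine CoxeterMatrix.isLiftable_of_cover (B1 := {s | (s : W) ∈ S1}) (B2 := {s | (s : W) ∈ S2})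
      hcover ?_ ?_ ?_
    · intro s hs1 t ht1
      rw [hf1 s hs1, hf1 t ht1]
      exact l.map_mul_pow_eq_one (hpow s t)
    · intro s hs2 t ht2
      rw [hf2 s hs2, hf2 t ht2]
      exact r.map_mul_pow_eq_one (hpow s t)
    · intro s hs t ht
      have hst := hinf s ⟨hs.1, fun h => hs.2 h.2⟩ t ⟨ht.1, fun h => ht.2 h.1⟩
      exact Nat.eq_zero_of_zero_dvd (hst ▸ orderOf_dvd_of_pow_eq_one (hpow s t))
  have hφ (s : S) : cs.lift ⟨f, hlift⟩ s = f s := by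
    rw [← cs.lift_apply_simple hlift, hsimple]
  refine ⟨cs.lift ⟨f, hlift⟩, ?_, ?_⟩ <;> refine MonoidHom.comp_subtype_closure_eq fun x hx => ?_
  · rw [hφ ⟨x, hunion ▸ Or.inl hx⟩, hf1 _ hx]
  · rw [hφ ⟨x, hunion ▸ Or.inr hx⟩, hf2 _ hx]

theorem isPushout_closure_of_exists_lift {S1 S2 : Set W} (hgen : closure (S1 ∪ S2) = ⊤)
    (hlift : ∀ (G : Type u) [Group G] (l : closure S1 →* G) (r : closure S2 →* G),
      l.comp (inclusion (closure_mono Set.inter_subset_left)) =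
        r.comp (inclusion (closure_mono Set.inter_subset_right)) →
      ∃ φ : W →* G, φ.comp (closure S1).subtype = l ∧ φ.comp (closure S2).subtype = r) :
    IsPushout
      (GrpCat.ofHom (inclusion (closure_mono (Set.inter_subset_left : S1 ∩ S2 ⊆ S1))))
      (GrpCat.ofHom (inclusion (closure_mono (Set.inter_subset_right : S1 ∩ S2 ⊆ S2))))
      (GrpCat.ofHom (closure S1).subtype) (GrpCat.ofHom (closure S2).subtype) := by
  set i₁ := GrpCat.ofHom (inclusion (closure_mono (Set.inter_subset_left : S1 ∩ S2 ⊆ S1)))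
  set i₂ := GrpCat.ofHom (inclusion (closure_mono (Set.inter_subset_right : S1 ∩ S2 ⊆ S2)))
  have hcomm : CommSq i₁ i₂ (GrpCat.ofHom (closure S1).subtype)
      (GrpCat.ofHom (closure S2).subtype) := ⟨rfl⟩
  have hdesc (s : PushoutCocone i₁ i₂) :=
    hlift (s.pt : Type u) s.inl.hom s.inr.hom (congrArg GrpCat.Hom.hom s.condition)
  refine IsPushout.of_isColimit' hcomm <| PushoutCocone.IsColimit.mk hcomm.w
    (fun s => GrpCat.ofHom (hdesc s).choose) (fun s => GrpCat.hom_ext (hdesc s).choose_spec.1)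
    (fun s => GrpCat.hom_ext (hdesc s).choose_spec.2) fun s m hm1 hm2 =>
      GrpCat.hom_ext <| MonoidHom.eq_of_comp_subtype_closure_eq hgen
        ((congrArg GrpCat.Hom.hom hm1).trans (hdesc s).choose_spec.1.symm)
        ((congrArg GrpCat.Hom.hom hm2).trans (hdesc s).choose_spec.2.symm)

open CategoryTheory in
theorem visual_amalgamated_product_general {W : Type u} [Group W] (S S1 S2 : Set W)
    (hcox : IsCoxeterGeneratingSet W S)
    (hunion : S1 ∪ S2 = S)
    (hinf : ∀ a ∈ S1 \ (S1 ∩ S2), ∀ b ∈ S2 \ (S1 ∩ S2), orderOf (a * b) = 0) :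
    IsPushout
      (GrpCat.ofHom (Subgroup.inclusion
        (Subgroup.closure_mono (Set.inter_subset_left : S1 ∩ S2 ⊆ S1))))
      (GrpCat.ofHom (Subgroup.inclusion
        (Subgroup.closure_mono (Set.inter_subset_right : S1 ∩ S2 ⊆ S2))))
      (GrpCat.ofHom (Subgroup.closure S1).subtype)
      (GrpCat.ofHom (Subgroup.closure S2).subtype) :=
  isPushout_closure_of_exists_lift (hunion ▸ hcox.closure_eq_top) fun _ _ =>
    hcox.exists_lift hunion hinf

open CategoryTheory in
/-- Let `(W,S)` be a Coxeter system of finite rank, and suppose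
`S1, S2 ⊆ S` satisfy `S = S1 ∪ S2` and, with `S0 = S1 ∩ S2`, `m(a,b) = ∞` for all
`a ∈ S1 − S0` and `b ∈ S2 − S0`.  Then the square of inclusions
`⟨S0⟩ → ⟨S1⟩, ⟨S0⟩ → ⟨S2⟩, ⟨S1⟩ → W, ⟨S2⟩ → W` is a pushout square in the category of
groups, i.e. the canonical homomorphism `⟨S1⟩ *_{⟨S0⟩} ⟨S2⟩ → W` is an isomorphism. -/
theorem visual_amalgamated_product {W : Type u} [Group W] (S S1 S2 : Set W)
    (hcox : IsCoxeterGeneratingSet W S) (hfin : S.Finite)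
    (hunion : S1 ∪ S2 = S)
    (hinf : ∀ a ∈ S1 \ (S1 ∩ S2), ∀ b ∈ S2 \ (S1 ∩ S2), orderOf (a * b) = 0) :
    IsPushout
      (GrpCat.ofHom (Subgroup.inclusion
        (Subgroup.closure_mono (Set.inter_subset_left : S1 ∩ S2 ⊆ S1))))
      (GrpCat.ofHom (Subgroup.inclusion
        (Subgroup.closure_mono (Set.inter_subset_right : S1 ∩ S2 ⊆ S2))))
      (GrpCat.ofHom (Subgroup.closure S1).subtype)
      (GrpCat.ofHom (Subgroup.closure S2).subtype) :=
  visual_amalgamated_product_general S S1 S2 hcox hunion hinf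
end

section
/- Every Coxeter system (W,S) of finite rank admits a reduced visual tree decomposition such that for every vertex v of the tree, the bag R_v is not separated by any complete subset of R_v, and for every edge {u,v} of the tree, the set R_u ∩ R_v is complete. -/
universe u

variable {W : Type u} [Group W]

/-! Induction on `|S|`. If no complete subset separates `S`, a single bag will do. Otherwise pick
a complete set `T` that is a minimal `(a,b)`-separator of `S`; with `C` the component of `a` in
`S − T`, the sets `C ∪ T` and `S − C` form a separation of `S` over `T`. Both pieces are smaller,
so by induction they have decompositions in which moreover every complete subset lies in a bag.
Then `T` lies in a bag on each side, and by minimality every element of `T` has neighbours both in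
`C` and in the component of `b`, which forces `T` to lie properly inside some bag on each side.
Joining the two trees by an edge between these bags gives the decomposition of `S`. -/

namespace SimpleGraph

variable {V V' : Type*} {G : SimpleGraph V} {H : SimpleGraph V'}

lemma Reachable.map_of_adj_imp_eq_or_adj (f : V → V')
    (hf : ∀ ⦃x y⦄, G.Adj x y → f x = f y ∨ H.Adj (f x) (f y)) {u w : V}
    (h : G.Reachable u w) : H.Reachable (f u) (f w) := by
  rw [reachable_iff_reflTransGen] at h ⊢
  refine h.lift' f fun x y hxy => ?_
  change Relation.ReflTransGen H.Adj (f x) (f y)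
  rcases hf hxy with e | e
  · exact e ▸ .refl
  · exact .single e

lemma reachable_iff_of_retraction (ι : H →g G) (p : V → V')
    (hp : ∀ ⦃x y⦄, G.Adj x y → p x = p y ∨ H.Adj (p x) (p y)) (hpι : ∀ a, p (ι a) = a)
    (hfib : ∀ x, G.Reachable (ι (p x)) x) {a : V'} {x : V} :
    G.Reachable (ι a) x ↔ H.Reachable a (p x) :=
  ⟨fun h => hpι a ▸ h.map_of_adj_imp_eq_or_adj p hp, fun h => (h.map ι).trans (hfib x)⟩

lemma IsAcyclic.not_reachable_deleteEdges (hG : G.IsAcyclic) {u v : V} (h : G.Adj u v) :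
    ¬ (G.deleteEdges {s(u, v)}).Reachable u v :=
  isAcyclic_iff_forall_adj_isBridge.mp hG h

lemma Reachable.deleteEdges_or {u v w : V} (hr : G.Reachable u w) :
    (G.deleteEdges {s(u, v)}).Reachable u w ∨ (G.deleteEdges {s(u, v)}).Reachable v w := by
  rw [reachable_iff_reflTransGen] at hr
  induction hr with
  | refl => exact .inl .rfl
  | @tail b c _ hbc ih =>
    by_cases he : s(b, c) = s(u, v)
    · rcases Sym2.eq_iff.mp he with ⟨rfl, rfl⟩ | ⟨rfl, rfl⟩
      · exact .inr .rfl
      · exact .inl .rfl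
    · have hbc' : (G.deleteEdges {s(u, v)}).Adj b c := by simp [hbc, he]
      exact ih.imp (·.trans hbc'.reachable) (·.trans hbc'.reachable)

lemma Preconnected.exists_adj_reachable_deleteEdges (hG : G.Preconnected) {u w : V}
    (hne : u ≠ w) : ∃ v, G.Adj u v ∧ (G.deleteEdges {s(u, v)}).Reachable v w := by
  classical
  obtain ⟨p, hp⟩ := (hG u w).some.toPath
  cases p with
  | nil => exact absurd rfl hne
  | @cons _ v _ h q =>
    rw [Walk.cons_isPath_iff] at hp
    refine ⟨v, h, ⟨q.toDeleteEdges {s(u, v)} fun e he hes => ?_⟩⟩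
    rw [Set.mem_singleton_iff] at hes
    exact hp.2 (q.fst_mem_support_of_mem_edges (hes ▸ he))

variable {V₁ V₂ : Type*} {T₁ : SimpleGraph V₁} {T₂ : SimpleGraph V₂} {v₁ : V₁} {v₂ : V₂}

lemma reachable_sum_sup_edge_deleteEdges_inl_iff (h₂ : T₂.Preconnected) {a b : V₁}
    {x : V₁ ⊕ V₂} :
    ((T₁.sum T₂ ⊔ edge (.inl v₁) (.inr v₂)).deleteEdges {s(.inl a, .inl b)}).Reachable
        (.inl a) x ↔ (T₁.deleteEdges {s(a, b)}).Reachable a (x.elim id fun _ => v₁) := by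
  refine reachable_iff_of_retraction ⟨Sum.inl, fun h => ?_⟩ _ ?_ (fun _ => rfl) ?_
  · simp_all [edge_adj]
  · rintro (c | c) (d | d) h <;> simp_all [edge_adj]
  · rintro (c | c)
    · rfl
    · refine ((Reachable.refl (G := ⊥) v₁).sum_sup_edge (h₂ v₂ c)).mono ?_
      rintro (c | c) (d | d) h <;> simp_all [edge_adj]

lemma reachable_sum_sup_edge_deleteEdges_inr_iff (h₁ : T₁.Preconnected) {a b : V₂}
    {x : V₁ ⊕ V₂} :
    ((T₁.sum T₂ ⊔ edge (.inl v₁) (.inr v₂)).deleteEdges {s(.inr a, .inr b)}).Reachable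
        (.inr a) x ↔ (T₂.deleteEdges {s(a, b)}).Reachable a (x.elim (fun _ => v₂) id) := by
  refine reachable_iff_of_retraction ⟨Sum.inr, fun h => ?_⟩ _ ?_ (fun _ => rfl) ?_
  · simp_all [edge_adj]
  · rintro (c | c) (d | d) h <;> simp_all [edge_adj]
  · rintro (c | c)
    · refine ((h₁ v₁ c).sum_sup_edge (Reachable.refl (G := ⊥) v₂)).symm.mono ?_
      rintro (c | c) (d | d) h <;> simp_all [edge_adj]
    · rfl

lemma reachable_sum_sup_edge_deleteEdges_iff (h₁ : T₁.Preconnected) (h₂ : T₂.Preconnected)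
    {x y : V₁ ⊕ V₂} :
    ((T₁.sum T₂ ⊔ edge (.inl v₁) (.inr v₂)).deleteEdges {s(.inl v₁, .inr v₂)}).Reachable x y ↔
      x.isRight = y.isRight := by
  set G := (T₁.sum T₂ ⊔ edge (.inl v₁) (.inr v₂)).deleteEdges {s(.inl v₁, .inr v₂)}
  let ι : (⊥ : SimpleGraph Bool) →g G := ⟨fun i => cond i (.inr v₂) (.inl v₁), nofun⟩
  have hfib : ∀ x, G.Reachable (ι x.isRight) x := by
    rintro (c | c)
    · refine ((h₁ v₁ c).map (Embedding.sumInl (H := T₂)).toHom).mono ?_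
      rintro (c | c) (d | d) h <;> simp_all [G]
    · refine ((h₂ v₂ c).map (Embedding.sumInr (G := T₁)).toHom).mono ?_
      rintro (c | c) (d | d) h <;> simp_all [G]
  have hι : ∀ {i : Bool} {y}, G.Reachable (ι i) y ↔ (⊥ : SimpleGraph Bool).Reachable i y.isRight :=
    reachable_iff_of_retraction ι Sum.isRight
      (by rintro (c | c) (d | d) h <;> simp_all [G]) (by simp [ι]) hfib
  rw [← reachable_bot, ← hι]
  exact ⟨(hfib x).trans, (hfib x).symm.trans⟩

lemma IsTree.sum_sup_edge (h₁ : T₁.IsTree) (h₂ : T₂.IsTree) :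
    (T₁.sum T₂ ⊔ edge (.inl v₁) (.inr v₂)).IsTree := by
  have p₁ := h₁.connected.preconnected
  have p₂ := h₂.connected.preconnected
  refine ⟨h₁.connected.sum_sup_edge h₂.connected, isAcyclic_iff_forall_adj_isBridge.2 ?_⟩
  rintro (a | a) (b | b) h
  · rw [isBridge_iff, reachable_sum_sup_edge_deleteEdges_inl_iff p₂]
    exact h₁.isAcyclic.not_reachable_deleteEdges (by simpa [edge_adj] using h)
  · obtain ⟨rfl, rfl⟩ : a = v₁ ∧ b = v₂ := by simpa [edge_adj] using h
    exact isBridge_sup_edge.mpr (.of_not_reachable (not_reachable_sum_inl_inr _ _))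
  · obtain ⟨rfl, rfl⟩ : a = v₂ ∧ b = v₁ := by simpa [edge_adj] using h
    rw [Sym2.eq_swap]
    exact isBridge_sup_edge.mpr (.of_not_reachable (not_reachable_sum_inl_inr _ _))
  · rw [isBridge_iff, reachable_sum_sup_edge_deleteEdges_inr_iff p₁]
    exact h₂.isAcyclic.not_reachable_deleteEdges (by simpa [edge_adj] using h)

end SimpleGraph

open SimpleGraph

lemma orderOf_mul_comm {G : Type*} [Group G] (a b : G) : orderOf (a * b) = orderOf (b * a) :=
  ((show SemiconjBy a (b * a) (a * b) by simp [SemiconjBy, mul_assoc]).orderOf_eq a).symm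

lemma mem_of_reachable_presGraph {A : Set W} {a y : W} (ha : a ∈ A)
    (h : (presGraph W A).Reachable a y) : y ∈ A := by
  rw [reachable_iff_reflTransGen] at h
  cases h with
  | refl => exact ha
  | tail _ hadj => exact hadj.2.2.1

lemma IsABSeparator.symm {S T : Set W} {a b : W} (h : IsABSeparator W S T a b) :
    IsABSeparator W S T b a :=
  ⟨h.2.1, h.1, fun r => h.2.2 r.symm⟩

lemma exists_relMinSeparator {S : Set W} (hfin : S.Finite) (hsep : SeparatedByComplete W S) :
    ∃ T ⊆ S, IsCompleteSet W T ∧ RelMinSeparator W S T := by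
  obtain ⟨T₀, hT₀S, hT₀c, a, ha, b, hb, hab⟩ := hsep
  obtain ⟨T, hTT₀, hmin⟩ := ((hfin.subset hT₀S).finite_subsets.subset
    (fun T (hT : T ⊆ T₀ ∧ IsABSeparator W S T a b) => hT.1)).exists_le_minimal
    ⟨le_rfl, ha, hb, hab⟩
  exact ⟨T, hTT₀.trans hT₀S, fun s hs t ht => hT₀c s (hTT₀ hs) t (hTT₀ ht), a, b, hmin.prop.2,
    fun T' hT' hab' => hT'.not_ge (hmin.le_of_le ⟨hT'.le.trans hTT₀, hab'⟩ hT'.le)⟩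

/-- Otherwise the component of `a` would stay closed after putting `t` back. -/
lemma exists_reachable_orderOf_ne_zero_of_relMin {S T : Set W} {a b t : W}
    (hab : IsABSeparator W S T a b) (hmin : ∀ T' ⊂ T, ¬ IsABSeparator W S T' a b) (ht : t ∈ T) :
    ∃ x, (presGraph W (S \ T)).Reachable a x ∧ orderOf (t * x) ≠ 0 := by
  obtain ⟨haT, hbT, hnr⟩ := hab
  by_contra! hno
  have hclosed : ∀ y, (presGraph W (S \ (T \ {t}))).Reachable a y →
      (presGraph W (S \ T)).Reachable a y := by
    intro y hy
    rw [reachable_iff_reflTransGen] at hy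
    induction hy with
    | refl => exact .rfl
    | @tail y z _ hyz ih =>
      have hy : y ∈ S \ T := mem_of_reachable_presGraph haT ih
      have hzt : z ≠ t := by
        rintro rfl
        exact hyz.2.2.2 (by rw [orderOf_mul_comm]; exact hno y ih)
      exact ih.trans (Adj.reachable ⟨hyz.1, hy, ⟨hyz.2.2.1.1, fun hz => hyz.2.2.1.2 ⟨hz, hzt⟩⟩,
        hyz.2.2.2⟩)
  refine hmin (T \ {t}) (Set.sdiff_singleton_ssubset.mpr ht)
    ⟨⟨haT.1, fun h => haT.2 h.1⟩, ⟨hbT.1, fun h => hbT.2 h.1⟩, fun r => hnr (hclosed b r)⟩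

lemma isSeparation_of_isABSeparator {S T : Set W} {a b : W} (hTS : T ⊆ S)
    (hab : IsABSeparator W S T a b) :
    IsSeparation W S ({y | (presGraph W (S \ T)).Reachable a y} ∪ T) T
      (S \ {y | (presGraph W (S \ T)).Reachable a y}) := by
  set C := {y | (presGraph W (S \ T)).Reachable a y}
  have hC : C ⊆ S \ T := fun y => mem_of_reachable_presGraph hab.1
  refine ⟨Set.union_sdiff_cancel' Set.subset_union_left
      (Set.union_subset (hC.trans Set.sdiff_subset) hTS), ?_,
    ⟨a, .inl .rfl, hab.1.2⟩, ⟨b, ⟨hab.2.1.1, hab.2.2⟩, hab.2.1.2⟩, ?_⟩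
  · ext x
    constructor
    · rintro ⟨hx | hx, -, hxC⟩
      exacts [absurd hx hxC, hx]
    · exact fun hx => ⟨.inr hx, hTS hx, fun hxC => (hC hxC).2 hx⟩
  · rintro x ⟨hx | hx, hxT⟩ y ⟨⟨hyS, hyC⟩, hyT⟩
    · by_contra h
      exact hyC (hx.trans (Adj.reachable ⟨fun e => hyC (e ▸ hx), hC hx, ⟨hyS, hyT⟩, h⟩))
    · exact absurd hx hxT

namespace IsSeparation

variable {S S₁ S₀ S₂ : Set W}

lemma left_ssubset (h : IsSeparation W S S₁ S₀ S₂) : S₁ ⊂ S := by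
  obtain ⟨hU, hI, -, ⟨b, hb₂, hb₀⟩, -⟩ := h
  exact ⟨hU ▸ Set.subset_union_left, fun hS => hb₀ (hI ▸ ⟨hS (hU ▸ .inr hb₂), hb₂⟩)⟩

lemma right_ssubset (h : IsSeparation W S S₁ S₀ S₂) : S₂ ⊂ S := by
  obtain ⟨hU, hI, ⟨a, ha₁, ha₀⟩, -, -⟩ := h
  exact ⟨hU ▸ Set.subset_union_right, fun hS => ha₀ (hI ▸ ⟨ha₁, hS (hU ▸ .inl ha₁)⟩)⟩

lemma orderOf_eq_zero (h : IsSeparation W S S₁ S₀ S₂) :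
    ∀ x ∈ S₁ \ S₂, ∀ y ∈ S₂ \ S₁, orderOf (x * y) = 0 := by
  obtain ⟨-, rfl, -, -, hcross⟩ := h
  intro x hx y hy
  exact hcross x (by simpa using hx) y (by simpa using hy)

end IsSeparation

lemma IsCompleteSet.subset_or_subset {C S₁ S₂ : Set W} (hC : IsCompleteSet W C)
    (hCS : C ⊆ S₁ ∪ S₂) (hcross : ∀ x ∈ S₁ \ S₂, ∀ y ∈ S₂ \ S₁, orderOf (x * y) = 0) :
    C ⊆ S₁ ∨ C ⊆ S₂ := by
  by_contra! h
  obtain ⟨x, hxC, hx₁⟩ := Set.not_subset.mp h.1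
  obtain ⟨y, hyC, hy₂⟩ := Set.not_subset.mp h.2
  exact hC y hyC x hxC (hcross y ⟨(hCS hyC).resolve_right hy₂, hy₂⟩ x
    ⟨(hCS hxC).resolve_left hx₁, hx₁⟩) |>.elim

/-- The condition imposed on the two sides `A`, `B` of an edge with edge set `C` in a visual tree
decomposition. -/
def IsVisualSplit (A B C : Set W) : Prop :=
  A ∩ B = C ∧ ∀ a ∈ A \ C, ∀ b ∈ B \ C, orderOf (a * b) = 0

namespace IsVisualSplit

variable {A B C : Set W}

lemma symm (h : IsVisualSplit A B C) : IsVisualSplit B A C :=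
  ⟨Set.inter_comm B A ▸ h.1, fun b hb a ha => orderOf_mul_comm a b ▸ h.2 a ha b hb⟩

lemma union_left {S S' : Set W} (h : IsVisualSplit A B C) (hAB : A ∪ B = S) (hS' : S ∩ S' ⊆ A)
    (hcross : ∀ x ∈ S \ S', ∀ y ∈ S' \ S, orderOf (x * y) = 0) :
    IsVisualSplit (A ∪ S') B C := by
  subst hAB
  refine ⟨?_, ?_⟩
  · rw [Set.union_inter_distrib_right, ← h.1]
    exact Set.union_eq_left.mpr fun x hx => ⟨hS' ⟨.inr hx.2, hx.1⟩, hx.2⟩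
  · rintro x ⟨hx | hx, hxC⟩ y ⟨hyB, hyC⟩
    · exact h.2 x ⟨hx, hxC⟩ y ⟨hyB, hyC⟩
    by_cases hxS : x ∈ A ∪ B
    · exact h.2 x ⟨hS' ⟨hxS, hx⟩, hxC⟩ y ⟨hyB, hyC⟩
    have hyS' : y ∉ S' := fun hy => hyC (h.1 ▸ ⟨hS' ⟨.inr hyB, hy⟩, hyB⟩)
    rw [orderOf_mul_comm]
    exact hcross y ⟨.inr hyB, hyS'⟩ x ⟨hx, hxS⟩

end IsVisualSplit

lemma subset_edgeSide {V : Type} (T : SimpleGraph V) (bag : V → Set W) {u v w : V}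
    (hw : (T.deleteEdges {s(u, v)}).Reachable u w) : bag w ⊆ edgeSide T bag u v :=
  fun _ hx => Set.mem_biUnion hw hx

namespace VisualTreeDecomp

variable {S : Set W} (D : VisualTreeDecomp W S)

lemma edgeSide_subset (u v : D.V) : edgeSide D.T D.bag u v ⊆ S :=
  Set.iUnion₂_subset fun w _ => D.bag_subset w

lemma edgeSide_union (u v : D.V) : edgeSide D.T D.bag u v ∪ edgeSide D.T D.bag v u = S := by
  refine (Set.union_subset (D.edgeSide_subset u v) (D.edgeSide_subset v u)).antisymm ?_
  intro x hx
  obtain ⟨w, hw⟩ := Set.mem_iUnion.mp (D.bags_cover.symm ▸ hx : x ∈ ⋃ w, D.bag w)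
  rcases (D.isTree.connected.preconnected u w).deleteEdges_or (v := v) with h | h
  · exact .inl (subset_edgeSide D.T D.bag h hw)
  · rw [Sym2.eq_swap] at h
    exact .inr (subset_edgeSide D.T D.bag h hw)

lemma isVisualSplit {u v : D.V} (h : D.T.Adj u v) :
    IsVisualSplit (edgeSide D.T D.bag u v) (edgeSide D.T D.bag v u) (D.bag u ∩ D.bag v) :=
  ⟨D.inter_eq u v h, D.infinite_order u v h⟩

/-- If `T` is itself a bag, the connected set adjacent to all of `T` lies on one side of an edge
at `T`, which forces `T` into the edge set, a proper subset of the neighbouring bag. -/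
lemma exists_ssubset_bag {T A : Set W} (hred : D.Reduced) {v₀ : D.V} (hT : T ⊆ D.bag v₀)
    {x₀ : W} (hC : {x | (presGraph W A).Reachable x₀ x} ⊆ S \ T)
    (hnb : ∀ t ∈ T, ∃ x, (presGraph W A).Reachable x₀ x ∧ orderOf (t * x) ≠ 0) :
    ∃ v, T ⊂ D.bag v := by
  obtain hTv | rfl := hT.ssubset_or_eq
  · exact ⟨v₀, hTv⟩
  have hx₀ : x₀ ∈ S \ D.bag v₀ := hC .rfl
  obtain ⟨w, hw⟩ := Set.mem_iUnion.mp (D.bags_cover.symm ▸ hx₀.1 : x₀ ∈ ⋃ w, D.bag w)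
  obtain ⟨u, hvu, hu⟩ := D.isTree.connected.preconnected.exists_adj_reachable_deleteEdges
    (u := v₀) (w := w) fun e => hx₀.2 (e ▸ hw)
  rw [Sym2.eq_swap] at hu
  have hsplit := D.isVisualSplit hvu.symm
  have hside : ∀ x, (presGraph W A).Reachable x₀ x → x ∈ edgeSide D.T D.bag u v₀ := by
    intro x hx
    rw [reachable_iff_reflTransGen] at hx
    induction hx with
    | refl => exact subset_edgeSide D.T D.bag hu hw
    | @tail y z hy hyz ih =>
      have hy' := hC ((reachable_iff_reflTransGen _ _).mpr hy)
      have hz := hC ((reachable_iff_reflTransGen _ _).mpr (hy.tail hyz))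
      by_contra hzA
      have hzS : z ∈ edgeSide D.T D.bag u v₀ ∪ edgeSide D.T D.bag v₀ u := by
        rw [D.edgeSide_union]
        exact hz.1
      exact hyz.2.2.2 (hsplit.2 y ⟨ih, fun h => hy'.2 h.2⟩ z
        ⟨hzS.resolve_left hzA, fun h => hz.2 h.2⟩)
  refine ⟨u, lt_of_le_of_lt (fun t ht => ?_) (hred u v₀ hvu.symm).1⟩
  obtain ⟨x, hx, hord⟩ := hnb t ht
  by_contra htI
  refine hord (orderOf_mul_comm x t ▸ hsplit.2 x ⟨hside x hx, fun h => (hC hx).2 h.2⟩ t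
    ⟨subset_edgeSide D.T D.bag .rfl ht, htI⟩)

variable {S' : Set W} in
/-- A set `S'` attached at `v` joins, for each edge, the side containing `v`. -/
lemma isVisualSplit_union_of_adj {v : D.V} (hv : S ∩ S' ⊆ D.bag v)
    (hcross : ∀ x ∈ S \ S', ∀ y ∈ S' \ S, orderOf (x * y) = 0) {a b : D.V} (hab : D.T.Adj a b) :
    IsVisualSplit (edgeSide D.T D.bag a b ∪ ⋃ (_ : (D.T.deleteEdges {s(a, b)}).Reachable a v), S')
      (edgeSide D.T D.bag b a ∪ ⋃ (_ : (D.T.deleteEdges {s(b, a)}).Reachable b v), S')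
      (D.bag a ∩ D.bag b) := by
  rcases (D.isTree.connected.preconnected a v).deleteEdges_or (v := b) with h | h
  · have h' : ¬ (D.T.deleteEdges {s(b, a)}).Reachable b v := fun h' =>
      D.isTree.isAcyclic.not_reachable_deleteEdges hab (h.trans (Sym2.eq_swap ▸ h').symm)
    simp only [h, h', Set.iUnion_true, Set.iUnion_false, Set.union_empty]
    exact (D.isVisualSplit hab).union_left (D.edgeSide_union a b)
      (hv.trans (subset_edgeSide _ _ h)) hcross
  · rw [Sym2.eq_swap] at h
    have h' : ¬ (D.T.deleteEdges {s(a, b)}).Reachable a v := fun h' =>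
      D.isTree.isAcyclic.not_reachable_deleteEdges hab.symm (h.trans (Sym2.eq_swap ▸ h').symm)
    simp only [h, h', Set.iUnion_true, Set.iUnion_false, Set.union_empty]
    rw [Set.inter_comm]
    exact ((D.isVisualSplit hab.symm).union_left (D.edgeSide_union b a)
      (hv.trans (subset_edgeSide _ _ h)) hcross).symm

/-- The last field is the invariant that lets two such decompositions be glued along a complete
separator. -/
structure IsJSJ (D : VisualTreeDecomp W S) : Prop where
  reduced : D.Reduced
  not_separatedByComplete : ∀ v, ¬ SeparatedByComplete W (D.bag v)
  isCompleteSet_inter : ∀ u v, D.T.Adj u v → IsCompleteSet W (D.bag u ∩ D.bag v)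
  exists_subset_bag : ∀ C ⊆ S, IsCompleteSet W C → ∃ v, C ⊆ D.bag v

def single (S : Set W) : VisualTreeDecomp W S where
  V := Unit
  fintypeV := inferInstance
  T := ⊥
  isTree := .of_subsingleton
  bag _ := S
  bag_subset _ := le_rfl
  bags_cover := Set.iUnion_const S
  inter_eq _ _ := nofun
  infinite_order _ _ := nofun

lemma isJSJ_single (h : ¬ SeparatedByComplete W S) : (single S).IsJSJ :=
  ⟨nofun, fun _ => h, nofun, fun _ hC _ => ⟨(), hC⟩⟩

section Glue

variable {S₁ S₂ : Set W} (D₁ : VisualTreeDecomp W S₁) (D₂ : VisualTreeDecomp W S₂)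
  (v₁ : D₁.V) (v₂ : D₂.V)

lemma edgeSide_sum_sup_edge_inl (a b : D₁.V) :
    edgeSide (D₁.T.sum D₂.T ⊔ edge (.inl v₁) (.inr v₂)) (Sum.elim D₁.bag D₂.bag)
      (.inl a) (.inl b) =
        edgeSide D₁.T D₁.bag a b ∪ ⋃ (_ : (D₁.T.deleteEdges {s(a, b)}).Reachable a v₁), S₂ := by
  ext x
  simp only [edgeSide, Set.mem_iUnion, Set.mem_ofPred_eq, exists_prop, Sum.exists,
    reachable_sum_sup_edge_deleteEdges_inl_iff D₂.isTree.connected.preconnected]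
  simp [← D₂.bags_cover]

lemma edgeSide_sum_sup_edge_inr (a b : D₂.V) :
    edgeSide (D₁.T.sum D₂.T ⊔ edge (.inl v₁) (.inr v₂)) (Sum.elim D₁.bag D₂.bag)
      (.inr a) (.inr b) =
        edgeSide D₂.T D₂.bag a b ∪ ⋃ (_ : (D₂.T.deleteEdges {s(a, b)}).Reachable a v₂), S₁ := by
  ext x
  simp only [edgeSide, Set.mem_iUnion, Set.mem_ofPred_eq, exists_prop, Sum.exists,
    reachable_sum_sup_edge_deleteEdges_inr_iff D₁.isTree.connected.preconnected]
  simp [← D₁.bags_cover, or_comm]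

lemma edgeSide_sum_sup_edge_inl_inr :
    edgeSide (D₁.T.sum D₂.T ⊔ edge (.inl v₁) (.inr v₂)) (Sum.elim D₁.bag D₂.bag)
      (.inl v₁) (.inr v₂) = S₁ := by
  ext x
  simp only [edgeSide, Set.mem_iUnion, Set.mem_ofPred_eq, exists_prop, Sum.exists,
    reachable_sum_sup_edge_deleteEdges_iff D₁.isTree.connected.preconnected
      D₂.isTree.connected.preconnected]
  simp [← D₁.bags_cover]

lemma edgeSide_sum_sup_edge_inr_inl :
    edgeSide (D₁.T.sum D₂.T ⊔ edge (.inl v₁) (.inr v₂)) (Sum.elim D₁.bag D₂.bag)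
      (.inr v₂) (.inl v₁) = S₂ := by
  ext x
  simp only [edgeSide, Sym2.eq_swap, Set.mem_iUnion, Set.mem_ofPred_eq, exists_prop, Sum.exists,
    reachable_sum_sup_edge_deleteEdges_iff D₁.isTree.connected.preconnected
      D₂.isTree.connected.preconnected]
  simp [← D₂.bags_cover]

variable {v₁ v₂}

lemma bag_inter_bag_eq (h₁ : S₁ ∩ S₂ ⊆ D₁.bag v₁) (h₂ : S₁ ∩ S₂ ⊆ D₂.bag v₂) :
    D₁.bag v₁ ∩ D₂.bag v₂ = S₁ ∩ S₂ :=
  (Set.inter_subset_inter (D₁.bag_subset v₁) (D₂.bag_subset v₂)).antisymm (Set.subset_inter h₁ h₂)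

lemma isVisualSplit_sum_sup_edge (h₁ : S₁ ∩ S₂ ⊆ D₁.bag v₁) (h₂ : S₁ ∩ S₂ ⊆ D₂.bag v₂)
    (hcross : ∀ x ∈ S₁ \ S₂, ∀ y ∈ S₂ \ S₁, orderOf (x * y) = 0) {x y : D₁.V ⊕ D₂.V}
    (hxy : (D₁.T.sum D₂.T ⊔ edge (.inl v₁) (.inr v₂)).Adj x y) :
    IsVisualSplit
      (edgeSide (D₁.T.sum D₂.T ⊔ edge (.inl v₁) (.inr v₂)) (Sum.elim D₁.bag D₂.bag) x y)
      (edgeSide (D₁.T.sum D₂.T ⊔ edge (.inl v₁) (.inr v₂)) (Sum.elim D₁.bag D₂.bag) y x)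
      (Sum.elim D₁.bag D₂.bag x ∩ Sum.elim D₁.bag D₂.bag y) := by
  have hbridge : IsVisualSplit S₁ S₂ (D₁.bag v₁ ∩ D₂.bag v₂) := by
    rw [bag_inter_bag_eq D₁ D₂ h₁ h₂]
    exact ⟨rfl, fun a ha b hb => hcross a (by simpa using ha) b (by simpa using hb)⟩
  rcases x with a | a <;> rcases y with b | b
  · rw [edgeSide_sum_sup_edge_inl, edgeSide_sum_sup_edge_inl]
    exact D₁.isVisualSplit_union_of_adj h₁ hcross (by simpa [edge_adj] using hxy)
  · obtain ⟨rfl, rfl⟩ : a = v₁ ∧ b = v₂ := by simpa [edge_adj] using hxy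
    rw [edgeSide_sum_sup_edge_inl_inr, edgeSide_sum_sup_edge_inr_inl]
    exact hbridge
  · obtain ⟨rfl, rfl⟩ : a = v₂ ∧ b = v₁ := by simpa [edge_adj] using hxy
    rw [edgeSide_sum_sup_edge_inl_inr, edgeSide_sum_sup_edge_inr_inl, Sum.elim_inr,
      Sum.elim_inl, Set.inter_comm]
    exact hbridge.symm
  · rw [edgeSide_sum_sup_edge_inr, edgeSide_sum_sup_edge_inr]
    exact D₂.isVisualSplit_union_of_adj (Set.inter_comm S₁ S₂ ▸ h₂)
      (fun x hx y hy => orderOf_mul_comm y x ▸ hcross y hy x hx)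
      (by simpa [edge_adj] using hxy)

def glue {v₁ : D₁.V} {v₂ : D₂.V} (h₁ : S₁ ∩ S₂ ⊆ D₁.bag v₁)
    (h₂ : S₁ ∩ S₂ ⊆ D₂.bag v₂) (hcross : ∀ x ∈ S₁ \ S₂, ∀ y ∈ S₂ \ S₁, orderOf (x * y) = 0) :
    VisualTreeDecomp W (S₁ ∪ S₂) where
  V := D₁.V ⊕ D₂.V
  fintypeV := letI := D₁.fintypeV; letI := D₂.fintypeV; inferInstance
  T := D₁.T.sum D₂.T ⊔ edge (.inl v₁) (.inr v₂)
  isTree := D₁.isTree.sum_sup_edge D₂.isTree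
  bag := Sum.elim D₁.bag D₂.bag
  bag_subset := by
    rintro (v | v)
    exacts [(D₁.bag_subset v).trans Set.subset_union_left,
      (D₂.bag_subset v).trans Set.subset_union_right]
  bags_cover := by rw [Set.iUnion_sumElim, D₁.bags_cover, D₂.bags_cover]
  inter_eq _ _ h := (isVisualSplit_sum_sup_edge D₁ D₂ h₁ h₂ hcross h).1
  infinite_order _ _ h := (isVisualSplit_sum_sup_edge D₁ D₂ h₁ h₂ hcross h).2

variable {D₁ D₂}

lemma forall_adj_glue {v₁ : D₁.V} {v₂ : D₂.V} (h₁ : S₁ ∩ S₂ ⊆ D₁.bag v₁)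
    (h₂ : S₁ ∩ S₂ ⊆ D₂.bag v₂) (hcross : ∀ x ∈ S₁ \ S₂, ∀ y ∈ S₂ \ S₁, orderOf (x * y) = 0)
    {P : Set W → Set W → Prop} (hP₁ : ∀ a b, D₁.T.Adj a b → P (D₁.bag a) (D₁.bag b))
    (hP₂ : ∀ a b, D₂.T.Adj a b → P (D₂.bag a) (D₂.bag b))
    (hbridge : P (D₁.bag v₁) (D₂.bag v₂) ∧ P (D₂.bag v₂) (D₁.bag v₁)) :
    ∀ x y, (D₁.glue D₂ h₁ h₂ hcross).T.Adj x y →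
      P ((D₁.glue D₂ h₁ h₂ hcross).bag x) ((D₁.glue D₂ h₁ h₂ hcross).bag y) := by
  rintro (a | a) (b | b) h <;>
    simp only [glue, edge_adj, sup_adj, sum_adj_inl, sum_adj_inr] at h ⊢
  · exact hP₁ a b (by simpa using h)
  · obtain ⟨rfl, rfl⟩ : a = v₁ ∧ b = v₂ := by simpa using h
    exact hbridge.1
  · obtain ⟨rfl, rfl⟩ : a = v₂ ∧ b = v₁ := by simpa using h
    exact hbridge.2
  · exact hP₂ a b (by simpa using h)

lemma IsJSJ.glue (hD₁ : D₁.IsJSJ) (hD₂ : D₂.IsJSJ) {v₁ : D₁.V} {v₂ : D₂.V}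
    (h₁ : S₁ ∩ S₂ ⊂ D₁.bag v₁) (h₂ : S₁ ∩ S₂ ⊂ D₂.bag v₂)
    (hcomplete : IsCompleteSet W (S₁ ∩ S₂))
    (hcross : ∀ x ∈ S₁ \ S₂, ∀ y ∈ S₂ \ S₁, orderOf (x * y) = 0) :
    (D₁.glue D₂ h₁.subset h₂.subset hcross).IsJSJ := by
  have hbridge := bag_inter_bag_eq D₁ D₂ h₁.subset h₂.subset
  have hbridge' : D₂.bag v₂ ∩ D₁.bag v₁ = S₁ ∩ S₂ := Set.inter_comm (D₂.bag v₂) _ ▸ hbridge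
  refine ⟨?_, ?_, ?_, fun C hC hCc => ?_⟩
  · refine forall_adj_glue _ _ _ (P := fun A B => A ∩ B ⊂ A ∧ A ∩ B ⊂ B)
      hD₁.reduced hD₂.reduced ?_
    simp only [hbridge, hbridge']
    exact ⟨⟨h₁, h₂⟩, ⟨h₂, h₁⟩⟩
  · rintro (v | v)
    exacts [hD₁.not_separatedByComplete v, hD₂.not_separatedByComplete v]
  · refine forall_adj_glue _ _ _ (P := fun A B => IsCompleteSet W (A ∩ B))
      hD₁.isCompleteSet_inter hD₂.isCompleteSet_inter ?_
    simp only [hbridge, hbridge']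
    exact ⟨hcomplete, hcomplete⟩
  · rcases hCc.subset_or_subset hC hcross with h | h
    · obtain ⟨v, hv⟩ := hD₁.exists_subset_bag C h hCc
      exact ⟨.inl v, hv⟩
    · obtain ⟨v, hv⟩ := hD₂.exists_subset_bag C h hCc
      exact ⟨.inr v, hv⟩

end Glue

lemma IsJSJ.exists_ssubset_bag_of_relMin {S S' T : Set W}
    {D : VisualTreeDecomp W S'} (hD : D.IsJSJ) (hTS' : T ⊆ S') (hT : IsCompleteSet W T) {a b : W}
    (hab : IsABSeparator W S T a b) (hmin : ∀ T' ⊂ T, ¬ IsABSeparator W S T' a b)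
    (hC : {x | (presGraph W (S \ T)).Reachable a x} ⊆ S' \ T) :
    ∃ v, T ⊂ D.bag v := by
  obtain ⟨v₀, hv₀⟩ := hD.exists_subset_bag T hTS' hT
  exact D.exists_ssubset_bag hD.reduced hv₀ hC fun t ht =>
    exists_reachable_orderOf_ne_zero_of_relMin hab hmin ht

theorem exists_isJSJ {S : Set W} (hfin : S.Finite) :
    ∃ D : VisualTreeDecomp W S, D.IsJSJ := by
  induction hn : S.ncard using Nat.strong_induction_on generalizing S with
  | _ n ih =>
  have ih' : ∀ S' ⊂ S, ∃ D : VisualTreeDecomp W S', D.IsJSJ := fun S' hS' =>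
    ih _ (hn ▸ Set.ncard_lt_ncard hS' hfin) (hfin.subset hS'.subset) rfl
  by_cases hsep : SeparatedByComplete W S
  swap
  · exact ⟨_, isJSJ_single hsep⟩
  obtain ⟨T, hTS, hT, a, b, hab, hmin⟩ := exists_relMinSeparator hfin hsep
  have hsplit := isSeparation_of_isABSeparator hTS hab
  obtain ⟨D₁, hD₁⟩ := ih' _ hsplit.left_ssubset
  obtain ⟨D₂, hD₂⟩ := ih' _ hsplit.right_ssubset
  obtain ⟨v₁, hv₁⟩ := hD₁.exists_ssubset_bag_of_relMin Set.subset_union_right hT hab hmin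
    fun x hx => ⟨.inl hx, (mem_of_reachable_presGraph hab.1 hx).2⟩
  obtain ⟨v₂, hv₂⟩ := hD₂.exists_ssubset_bag_of_relMin
    (fun t ht => ⟨hTS ht, fun h => (mem_of_reachable_presGraph hab.1 h).2 ht⟩) hT
    hab.symm (fun T' hT' h => hmin T' hT' h.symm) fun x hx =>
      have hx' := mem_of_reachable_presGraph hab.2.1 hx
      ⟨⟨hx'.1, fun hxC => hab.2.2 (hxC.trans hx.symm)⟩, hx'.2⟩
  rw [← hsplit.1]
  exact ⟨_, hD₁.glue hD₂ (hsplit.2.1.trans_ssubset hv₁) (hsplit.2.1.trans_ssubset hv₂)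
    (by rw [hsplit.2.1]; exact hT) hsplit.orderOf_eq_zero⟩

end VisualTreeDecomp

theorem exists_visual_JSJ_decomposition_general {W : Type u} [Group W] (S : Set W) (hfin : S.Finite) :
    ∃ D : VisualTreeDecomp W S, D.Reduced ∧
      (∀ v, ¬ SeparatedByComplete W (D.bag v)) ∧
      (∀ u v, D.T.Adj u v → IsCompleteSet W (D.bag u ∩ D.bag v)) := by
  obtain ⟨D, hD⟩ := VisualTreeDecomp.exists_isJSJ hfin
  exact ⟨D, hD.reduced, hD.not_separatedByComplete, hD.isCompleteSet_inter⟩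

/-- Lemma 2.2. Every Coxeter system `(W,S)` of finite rank admits a
reduced visual tree decomposition such that no bag is separated by a complete subset and
every edge set is complete. -/
theorem exists_visual_JSJ_decomposition {W : Type u} [Group W] (S : Set W)
    (hcox : IsCoxeterGeneratingSet W S) (hfin : S.Finite) :
    ∃ D : VisualTreeDecomp W S, D.Reduced ∧
      (∀ v, ¬ SeparatedByComplete W (D.bag v)) ∧
      (∀ u v, D.T.Adj u v → IsCompleteSet W (D.bag u ∩ D.bag v)) :=
  exists_visual_JSJ_decomposition_general S hfin
end
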